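/- Let M, N be pointed metric spaces, 1 ≤ p < ∞, and T ∈ E_c(M, N). Then T̂ : ℓ_p^e(M) → ℓ_p^e(N) defined by T̂((x_n)) = (T(x_n)) is well defined, is Lipschitz with T̂(0) = 0, and satisfies d_e(T, 0) ≤ d_e(T̂, 0) ≤ Lip(T̂) ≤ d_e(T, 0), so Lip(T̂) = d_e(T, 0); moreover T ↦ T̂ is injective. -/

import Mathlib

section

variable {M N : Type*} [MetricSpace M] [MetricSpace N]

/-- Membership in `M^e = E_c(M, ℝ)` (base point `z`). -/
def MemEc (z : M) (f : M → ℝ) : Prop :=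
  Continuous f ∧ ∃ k > (0 : ℝ), ∀ x : M, |f x| ≤ k * dist x z

/-- The norm `‖f‖_e` on `M^e`. -/
noncomputable def eNormR (z : M) (f : M → ℝ) : ℝ :=
  ⨆ x : {x : M // x ≠ z}, |f x.1| / dist x.1 z

/-- Membership in `E_c(M, N)`. -/
def MemEcMap (z : M) (zN : N) (T : M → N) : Prop :=
  Continuous T ∧ ∃ k > (0 : ℝ), ∀ x : M, dist (T x) zN ≤ k * dist x z

/-- `d_e(T, 0) = sup_{x ≠ 0} d(T x, 0)/d(x, 0)`. -/
noncomputable def deZero (z : M) (zN : N) (T : M → N) : ℝ :=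
  ⨆ x : {x : M // x ≠ z}, dist (T x.1) zN / dist x.1 z

/-- The metric `d_p` on `ℓ_p^e(M)` (sup over the unit ball of `M^e`). -/
noncomputable def dpDist (z : M) (p : ℝ) (x y : ℕ → M) : ℝ :=
  ⨆ f : {f : M → ℝ // MemEc z f ∧ eNormR z f ≤ 1},
    (∑' n : ℕ, |f.1 (x n) - f.1 (y n)| ^ p) ^ (1 / p)

/-- Membership in `ℓ_p^e(M)`. -/
def Memlpe (z : M) (p : ℝ) (x : ℕ → M) : Prop :=
  ∃ C : ℝ, ∀ f : M → ℝ, MemEc z f → eNormR z f ≤ 1 →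
    (∑' n : ℕ, |f (x n)| ^ p) ≤ C

end


/-!
For `f` in the unit ball of `N^e`, the functional `f ∘ T / d_e(T, 0)` lies in the unit ball of
`M^e`. Since `T̂` acts on a sequence only through the values `f (T x_n)`, this gives both
`T̂(ℓ_p^e(M)) ⊆ ℓ_p^e(N)` and `Lip(T̂) ≤ d_e(T, 0)`. Conversely, the sequence `(x, 0, 0, …)` has
`d_p`-norm exactly `d(x, 0)`, the supremum being attained at `f = d(·, 0)`; as `T̂` maps it to
`(T x, 0, 0, …)`, this gives `d_e(T, 0) ≤ d_e(T̂, 0)` and the injectivity of `T ↦ T̂`.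
-/

open Function Set

lemma tsum_comp_update_const {α : Type*} {z : α} {g : α → ℝ} (hg : g z = 0) (x : α) :
    ∑' n, g (update (fun _ => z) 0 x n) = g x := by
  rw [tsum_eq_single 0 fun n hn => by rw [update_of_ne hn, hg]]
  simp

section
variable {M N : Type*} [MetricSpace M] [MetricSpace N] {z : M} {zN : N} {p : ℝ}

lemma le_iSup_div_dist_mul {g : M → ℝ} {k : ℝ} (hk : ∀ x, g x ≤ k * dist x z) (x : M) :
    g x ≤ (⨆ y : {y : M // y ≠ z}, g y.1 / dist y.1 z) * dist x z := by
  rcases eq_or_ne x z with rfl | hx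
  · simpa using hk x
  · have hbdd : BddAbove (range fun y : {y : M // y ≠ z} => g y.1 / dist y.1 z) :=
      ⟨k, forall_mem_range.2 fun y => (div_le_iff₀ (dist_pos.2 y.2)).2 (hk y.1)⟩
    exact (div_le_iff₀ (dist_pos.2 hx)).1 (le_ciSup hbdd ⟨x, hx⟩)

lemma iSup_div_dist_le {g : M → ℝ} {c : ℝ} (hc : 0 ≤ c) (h : ∀ x, g x ≤ c * dist x z) :
    (⨆ y : {y : M // y ≠ z}, g y.1 / dist y.1 z) ≤ c :=
  Real.iSup_le (fun y => (div_le_iff₀ (dist_pos.2 y.2)).2 (h y.1)) hc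

lemma MemEc.apply_base {f : M → ℝ} (hf : MemEc z f) : f z = 0 := by
  obtain ⟨-, k, -, hk⟩ := hf
  simpa using hk z

lemma MemEc.abs_le_dist {f : M → ℝ} (hf : MemEc z f) (h1 : eNormR z f ≤ 1) (x : M) :
    |f x| ≤ dist x z := by
  obtain ⟨-, k, -, hk⟩ := hf
  calc |f x| ≤ eNormR z f * dist x z := le_iSup_div_dist_mul hk x
    _ ≤ dist x z := mul_le_of_le_one_left dist_nonneg h1

lemma memEc_dist (z : M) : MemEc z (dist · z) ∧ eNormR z (dist · z) ≤ 1 := by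
  have h : ∀ x, |dist x z| ≤ 1 * dist x z := fun x => by rw [one_mul, abs_of_nonneg dist_nonneg]
  exact ⟨⟨continuous_id.dist continuous_const, 1, one_pos, h⟩, iSup_div_dist_le zero_le_one h⟩

lemma MemEcMap.apply_base {T : M → N} (hT : MemEcMap z zN T) : T z = zN := by
  obtain ⟨-, k, -, hk⟩ := hT
  simpa using hk z

lemma deZero_nonneg (T : M → N) : 0 ≤ deZero z zN T :=
  Real.iSup_nonneg fun _ => div_nonneg dist_nonneg dist_nonneg

lemma MemEcMap.dist_le_deZero_mul {T : M → N} (hT : MemEcMap z zN T) (x : M) :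
    dist (T x) zN ≤ deZero z zN T * dist x z := by
  obtain ⟨-, k, -, hk⟩ := hT
  exact le_iSup_div_dist_mul hk x

lemma exists_unitBall_comp_eq_mul {T : M → N} (hT : Continuous T) {c : ℝ} (hc : 0 ≤ c)
    (hTc : ∀ x, dist (T x) zN ≤ c * dist x z) {f : N → ℝ} (hf : MemEc zN f)
    (h1 : eNormR zN f ≤ 1) :
    ∃ g : M → ℝ, MemEc z g ∧ eNormR z g ≤ 1 ∧ ∀ x, f (T x) = c * g x := by
  have hfT : ∀ x, |f (T x)| ≤ c * dist x z := fun x => (hf.abs_le_dist h1 (T x)).trans (hTc x)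
  have hg : ∀ x, |f (T x) / c| ≤ 1 * dist x z := fun x => by
    rw [abs_div, abs_of_nonneg hc, one_mul]
    exact div_le_of_le_mul₀ hc dist_nonneg (mul_comm c (dist x z) ▸ hfT x)
  refine ⟨fun x => f (T x) / c, ⟨(hf.1.comp hT).div_const c, 1, one_pos, hg⟩,
    iSup_div_dist_le zero_le_one hg, fun x => ?_⟩
  rcases hc.eq_or_lt with rfl | hc
  · -- `f ∘ T / 0` is the junk `0`, but then `f ∘ T` vanishes as well
    simpa using hfT x
  · exact (mul_div_cancel₀ _ hc.ne').symm

lemma tsum_abs_mul_rpow {c : ℝ} (hc : 0 ≤ c) (p : ℝ) (u : ℕ → ℝ) :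
    ∑' n, |c * u n| ^ p = c ^ p * ∑' n, |u n| ^ p := by
  rw [← tsum_mul_left]
  exact tsum_congr fun n => by rw [abs_mul, abs_of_nonneg hc, Real.mul_rpow hc (abs_nonneg _)]

lemma Memlpe.map {T : M → N} (hT : Continuous T) {c : ℝ} (hc : 0 ≤ c)
    (hTc : ∀ x, dist (T x) zN ≤ c * dist x z) {x : ℕ → M} (hx : Memlpe z p x) :
    Memlpe zN p (fun n => T (x n)) := by
  obtain ⟨C, hC⟩ := hx
  refine ⟨c ^ p * C, fun f hf h1 => ?_⟩
  obtain ⟨g, hg, hg1, hfg⟩ := exists_unitBall_comp_eq_mul hT hc hTc hf h1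
  calc ∑' n, |f (T (x n))| ^ p = c ^ p * ∑' n, |g (x n)| ^ p := by
        simp only [hfg, tsum_abs_mul_rpow hc]
    _ ≤ c ^ p * C := mul_le_mul_of_nonneg_left (hC g hg hg1) (Real.rpow_nonneg hc p)

lemma dpDist_nonneg (z : M) (p : ℝ) (x y : ℕ → M) : 0 ≤ dpDist z p x y :=
  Real.iSup_nonneg fun _ => Real.rpow_nonneg (tsum_nonneg fun _ => by positivity) _

lemma dpDist_map_le_mul (hp : p ≠ 0) {T : M → N} (hT : Continuous T) {c : ℝ} (hc : 0 ≤ c)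
    (hTc : ∀ x, dist (T x) zN ≤ c * dist x z) {a b : ℕ → M} (hab : dpDist z p a b ≠ 0) :
    dpDist zN p (fun n => T (a n)) (fun n => T (b n)) ≤ c * dpDist z p a b := by
  have hbdd : BddAbove (range fun f : {f : M → ℝ // MemEc z f ∧ eNormR z f ≤ 1} =>
      (∑' n, |f.1 (a n) - f.1 (b n)| ^ p) ^ (1 / p)) := by
    -- an unbounded supremum is the junk value `0` in `ℝ`
    by_contra h
    exact hab (Real.iSup_of_not_bddAbove h)
  refine Real.iSup_le (fun f => ?_) (mul_nonneg hc (dpDist_nonneg z p a b))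
  obtain ⟨g, hg, hg1, hfg⟩ := exists_unitBall_comp_eq_mul hT hc hTc f.2.1 f.2.2
  calc (∑' n, |f.1 (T (a n)) - f.1 (T (b n))| ^ p) ^ (1 / p)
      = c * (∑' n, |g (a n) - g (b n)| ^ p) ^ (1 / p) := by
        simp only [hfg, ← mul_sub, tsum_abs_mul_rpow hc]
        rw [Real.mul_rpow (by positivity) (tsum_nonneg fun _ => by positivity), one_div,
          Real.rpow_rpow_inv hc hp]
    _ ≤ c * dpDist z p a b := mul_le_mul_of_nonneg_left (le_ciSup hbdd ⟨g, hg, hg1⟩) hc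

lemma dpDist_map_div_le (hp : p ≠ 0) {T : M → N} (hT : Continuous T) {c : ℝ} (hc : 0 ≤ c)
    (hTc : ∀ x, dist (T x) zN ≤ c * dist x z) (a b : ℕ → M) :
    dpDist zN p (fun n => T (a n)) (fun n => T (b n)) / dpDist z p a b ≤ c := by
  rcases eq_or_ne (dpDist z p a b) 0 with hab | hab
  · rw [hab, div_zero]
    exact hc
  · exact div_le_of_le_mul₀ (dpDist_nonneg z p a b) hc (dpDist_map_le_mul hp hT hc hTc hab)

lemma dpDist_update_const (hp : p ≠ 0) (x : M) :
    dpDist z p (update (fun _ => z) 0 x) (fun _ => z) = dist x z := by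
  have hterm : ∀ f : M → ℝ, MemEc z f →
      (∑' n, |f (update (fun _ => z) 0 x n) - f z| ^ p) ^ (1 / p) = |f x| := fun f hf => by
    rw [tsum_comp_update_const (g := fun w => |f w - f z| ^ p) (by simp [Real.zero_rpow hp]),
      hf.apply_base, sub_zero, one_div, Real.rpow_rpow_inv (abs_nonneg _) hp]
  have hbdd : BddAbove (range fun f : {f : M → ℝ // MemEc z f ∧ eNormR z f ≤ 1} =>
      (∑' n, |f.1 (update (fun _ => z) 0 x n) - f.1 z| ^ p) ^ (1 / p)) :=
    ⟨dist x z, forall_mem_range.2 fun f => (hterm f.1 f.2.1).trans_le (f.2.1.abs_le_dist f.2.2 x)⟩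
  refine le_antisymm (Real.iSup_le (fun f => ?_) dist_nonneg) ?_
  · exact (hterm f.1 f.2.1).trans_le (f.2.1.abs_le_dist f.2.2 x)
  · refine le_ciSup_of_le hbdd ⟨(dist · z), memEc_dist z⟩ ?_
    rw [hterm _ (memEc_dist z).1, abs_of_nonneg dist_nonneg]

lemma memlpe_update_const (hp : 0 < p) (x : M) : Memlpe z p (update (fun _ => z) 0 x) := by
  refine ⟨dist x z ^ p, fun f hf h1 => ?_⟩
  rw [tsum_comp_update_const (g := fun w => |f w| ^ p) (by simp [hf.apply_base, hp.ne'])]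
  exact Real.rpow_le_rpow (abs_nonneg _) (hf.abs_le_dist h1 x) hp.le

lemma memlpe_const (hp : p ≠ 0) : Memlpe z p (fun _ => z) :=
  ⟨0, fun f hf _ => by simp [hf.apply_base, Real.zero_rpow hp]⟩

/-- `d_e(T̂, 0)` for the dilation `T̂ : ℓ_p^e(M) → ℓ_p^e(N)`. -/
noncomputable def deZeroDilation (z : M) (zN : N) (p : ℝ) (T : M → N) : ℝ :=
  ⨆ x : {x : ℕ → M // Memlpe z p x ∧ x ≠ fun _ => z},
    dpDist zN p (fun n => T (x.1 n)) (fun _ => zN) / dpDist z p x.1 (fun _ => z)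

/-- `Lip(T̂)` for the dilation `T̂ : ℓ_p^e(M) → ℓ_p^e(N)`. -/
noncomputable def lipDilation (z : M) (zN : N) (p : ℝ) (T : M → N) : ℝ :=
  ⨆ q : {q : (ℕ → M) × (ℕ → M) // Memlpe z p q.1 ∧ Memlpe z p q.2 ∧ q.1 ≠ q.2},
    dpDist zN p (fun n => T (q.1.1 n)) (fun n => T (q.1.2 n)) / dpDist z p q.1.1 q.1.2

lemma lipDilation_le_deZero (hp : p ≠ 0) {T : M → N} (hT : MemEcMap z zN T) :
    lipDilation z zN p T ≤ deZero z zN T :=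
  Real.iSup_le (fun _ => dpDist_map_div_le hp hT.1 (deZero_nonneg T) hT.dist_le_deZero_mul _ _)
    (deZero_nonneg T)

lemma deZeroDilation_le_lipDilation (hp : p ≠ 0) {T : M → N} (hT : MemEcMap z zN T) :
    deZeroDilation z zN p T ≤ lipDilation z zN p T := by
  have hbdd : BddAbove (range fun q : {q : (ℕ → M) × (ℕ → M) //
      Memlpe z p q.1 ∧ Memlpe z p q.2 ∧ q.1 ≠ q.2} =>
        dpDist zN p (fun n => T (q.1.1 n)) (fun n => T (q.1.2 n)) / dpDist z p q.1.1 q.1.2) :=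
    ⟨deZero z zN T, forall_mem_range.2 fun q =>
      dpDist_map_div_le hp hT.1 (deZero_nonneg T) hT.dist_le_deZero_mul _ _⟩
  refine Real.iSup_le (fun x => ?_)
    (Real.iSup_nonneg fun _ => div_nonneg (dpDist_nonneg _ _ _ _) (dpDist_nonneg _ _ _ _))
  have hpair := le_ciSup hbdd ⟨(x.1, fun _ => z), x.2.1, memlpe_const hp, x.2.2⟩
  simp only [hT.apply_base] at hpair
  exact hpair

lemma deZero_le_deZeroDilation (hp : 0 < p) {T : M → N} (hT : MemEcMap z zN T) :
    deZero z zN T ≤ deZeroDilation z zN p T := by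
  have hbdd : BddAbove (range fun x : {x : ℕ → M // Memlpe z p x ∧ x ≠ fun _ => z} =>
      dpDist zN p (fun n => T (x.1 n)) (fun _ => zN) / dpDist z p x.1 (fun _ => z)) :=
    ⟨deZero z zN T, forall_mem_range.2 fun x => by
      simpa only [hT.apply_base] using
        dpDist_map_div_le hp.ne' hT.1 (deZero_nonneg T) hT.dist_le_deZero_mul x.1 (fun _ => z)⟩
  refine Real.iSup_le (fun x => ?_)
    (Real.iSup_nonneg fun _ => div_nonneg (dpDist_nonneg _ _ _ _) (dpDist_nonneg _ _ _ _))
  have hne : update (fun _ => z) 0 x.1 ≠ fun _ => z := fun h => x.2 (by simpa using congrFun h 0)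
  have hmap : (fun n => T (update (fun _ => z) 0 x.1 n)) = update (fun _ => zN) 0 (T x.1) := by
    rw [← hT.apply_base]
    exact comp_update T _ 0 x.1
  calc dist (T x.1) zN / dist x.1 z
      = dpDist zN p (fun n => T (update (fun _ => z) 0 x.1 n)) (fun _ => zN) /
          dpDist z p (update (fun _ => z) 0 x.1) (fun _ => z) := by
        rw [hmap, dpDist_update_const hp.ne', dpDist_update_const hp.ne']
    _ ≤ deZeroDilation z zN p T := le_ciSup hbdd ⟨_, memlpe_update_const hp x.1, hne⟩

end

/-- For `T ∈ E_c(M, N)` and `1 ≤ p < ∞`, the dilation `T̂((x_n)) = (T(x_n))`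
maps `ℓ_p^e(M)` into `ℓ_p^e(N)`, sends the base point to the base point, and
satisfies `d_e(T,0) ≤ d_e(T̂,0) ≤ Lip(T̂) ≤ d_e(T,0)`, so `Lip(T̂) = d_e(T,0)`;
moreover `T ↦ T̂` is injective. -/
theorem dilation_to_lipschitz {M N : Type*} [MetricSpace M] [MetricSpace N]
    (z : M) (zN : N) (p : ℝ) (hp : 1 ≤ p) (T : M → N) (hT : MemEcMap z zN T) :
    (∀ x : ℕ → M, Memlpe z p x → Memlpe zN p (fun n => T (x n))) ∧
    T z = zN ∧
    (deZero z zN T ≤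
        (⨆ x : {x : ℕ → M // Memlpe z p x ∧ x ≠ fun _ => z},
          dpDist zN p (fun n => T (x.1 n)) (fun _ => zN) /
            dpDist z p x.1 (fun _ => z)) ∧
      (⨆ x : {x : ℕ → M // Memlpe z p x ∧ x ≠ fun _ => z},
          dpDist zN p (fun n => T (x.1 n)) (fun _ => zN) /
            dpDist z p x.1 (fun _ => z)) ≤
        (⨆ q : {q : (ℕ → M) × (ℕ → M) // Memlpe z p q.1 ∧ Memlpe z p q.2 ∧ q.1 ≠ q.2},
          dpDist zN p (fun n => T (q.1.1 n)) (fun n => T (q.1.2 n)) /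
            dpDist z p q.1.1 q.1.2) ∧
      (⨆ q : {q : (ℕ → M) × (ℕ → M) // Memlpe z p q.1 ∧ Memlpe z p q.2 ∧ q.1 ≠ q.2},
          dpDist zN p (fun n => T (q.1.1 n)) (fun n => T (q.1.2 n)) /
            dpDist z p q.1.1 q.1.2) ≤ deZero z zN T) ∧
    (⨆ q : {q : (ℕ → M) × (ℕ → M) // Memlpe z p q.1 ∧ Memlpe z p q.2 ∧ q.1 ≠ q.2},
        dpDist zN p (fun n => T (q.1.1 n)) (fun n => T (q.1.2 n)) /
          dpDist z p q.1.1 q.1.2) = deZero z zN T ∧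
    (∀ S : M → N, MemEcMap z zN S →
      (∀ x : ℕ → M, Memlpe z p x →
        (fun n => T (x n)) = fun n => S (x n)) → T = S) := by
  have hp0 : 0 < p := by linarith
  have hle₁ := deZero_le_deZeroDilation hp0 hT
  have hle₂ := deZeroDilation_le_lipDilation hp0.ne' hT
  have hle₃ := lipDilation_le_deZero hp0.ne' hT
  refine ⟨fun x hx => hx.map hT.1 (deZero_nonneg T) hT.dist_le_deZero_mul, hT.apply_base,
    ⟨hle₁, hle₂, hle₃⟩, le_antisymm hle₃ (hle₁.trans hle₂), fun S _ hTS => funext fun x => ?_⟩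
  simpa using congrFun (hTS _ (memlpe_update_const hp0 x)) 0
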